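/- If Π₁ ⊔ Π₂ = Π, then erasing all bindings of pseudotype hi B from Π₁, Π₂ and Π yields contexts Π₁^q, Π₂^q, Π^q satisfying Π₁^q ∘ Π₂^q = Π^q. -/

import Mathlib

/-- Qualifiers `q ::= li | un`. -/
inductive Qual : Type
  | li
  | un
deriving DecidableEq

/-- Base pretypes (`int`, `bool`, `array`, ...), modelled as names. -/
abbrev BTy := String

/-- Types `T ::= q P` with pretypes `P ::= B | ⟨T,...,T⟩ | T → T`
(the outer qualifier is stored in each constructor). -/
inductive Ty : Type
  | base : Qual → BTy → Ty
  | tuple : Qual → List Ty → Ty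
  | arrow : Qual → Ty → Ty → Ty

/-- The qualifier of a type `q P`. -/
def Ty.q : Ty → Qual
  | .base q _ => q
  | .tuple q _ => q
  | .arrow q _ _ => q

/-- Pseudotypes `Υ ::= T | hi B`. -/
inductive PTy : Type
  | ty : Ty → PTy
  | hi : BTy → PTy

/-- A pseudotype is linear iff it is a type whose qualifier is `li`. -/
def PTy.isLin : PTy → Bool
  | .ty T => T.q = Qual.li
  | .hi _ => false

/-- Type contexts: lists of variable–pseudotype pairs (head = most recent binding). -/
abbrev Ctx := List (String × PTy)

/-- The context split relation `Γ₁ ∘ Γ₂ = Γ`: non-linear bindings are shared,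
linear bindings go to exactly one component. -/
inductive Split : Ctx → Ctx → Ctx → Prop
  | nil : Split [] [] []
  | both {Γ₁ Γ₂ Γ : Ctx} {x : String} {υ : PTy} :
      υ.isLin = false → Split Γ₁ Γ₂ Γ →
      Split ((x, υ) :: Γ₁) ((x, υ) :: Γ₂) ((x, υ) :: Γ)
  | left {Γ₁ Γ₂ Γ : Ctx} {x : String} {υ : PTy} :
      υ.isLin = true → Split Γ₁ Γ₂ Γ →
      Split ((x, υ) :: Γ₁) Γ₂ ((x, υ) :: Γ)
  | right {Γ₁ Γ₂ Γ : Ctx} {x : String} {υ : PTy} :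
      υ.isLin = true → Split Γ₁ Γ₂ Γ →
      Split Γ₁ ((x, υ) :: Γ₂) ((x, υ) :: Γ)

/-- The context pseudosplit `Γ₁ ⊔ Γ₂ = Γ`: same rules as the split `∘`, plus the
rule allowing a linear base-type binding `x : li B` in one component to be
accompanied by a hidden occurrence `x : hi B` in the other. -/
inductive PSplit : Ctx → Ctx → Ctx → Prop
  | nil : PSplit [] [] []
  | both {Γ₁ Γ₂ Γ : Ctx} {x : String} {υ : PTy} :
      υ.isLin = false → PSplit Γ₁ Γ₂ Γ →
      PSplit ((x, υ) :: Γ₁) ((x, υ) :: Γ₂) ((x, υ) :: Γ)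
  | left {Γ₁ Γ₂ Γ : Ctx} {x : String} {υ : PTy} :
      υ.isLin = true → PSplit Γ₁ Γ₂ Γ →
      PSplit ((x, υ) :: Γ₁) Γ₂ ((x, υ) :: Γ)
  | right {Γ₁ Γ₂ Γ : Ctx} {x : String} {υ : PTy} :
      υ.isLin = true → PSplit Γ₁ Γ₂ Γ →
      PSplit Γ₁ ((x, υ) :: Γ₂) ((x, υ) :: Γ)
  | hid {Γ₁ Γ₂ Γ : Ctx} {x : String} {B : BTy} :
      PSplit Γ₁ Γ₂ Γ →
      PSplit ((x, PTy.hi B) :: Γ₁) ((x, PTy.ty (Ty.base Qual.li B)) :: Γ₂)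
        ((x, PTy.ty (Ty.base Qual.li B)) :: Γ)

/-- Is a pseudotype of the hidden form `hi B`? -/
def PTy.isHi : PTy → Bool
  | .hi _ => true
  | .ty _ => false

/-- Erase all bindings of pseudotype `hi B` from a context. -/
def eraseHi (Γ : Ctx) : Ctx := Γ.filter (fun p => !p.2.isHi)

theorem PTy.isHi_eq_false_of_isLin {υ : PTy} (h : υ.isLin = true) : υ.isHi = false := by
  cases υ <;> simp_all [PTy.isLin, PTy.isHi]

@[simp]
theorem eraseHi_cons_hi (x : String) (B : BTy) (Γ : Ctx) :
    eraseHi ((x, .hi B) :: Γ) = eraseHi Γ := by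
  simp [eraseHi, PTy.isHi]

theorem eraseHi_cons_of_isHi_eq_false {x : String} {υ : PTy} (h : υ.isHi = false) (Γ : Ctx) :
    eraseHi ((x, υ) :: Γ) = (x, υ) :: eraseHi Γ := by
  simp [eraseHi, h]

/-- If `Γ₁ ⊔ Γ₂ = Γ`, then erasing all bindings of pseudotype `hi B` from
`Γ₁`, `Γ₂` and `Γ` yields contexts satisfying `Γ₁^q ∘ Γ₂^q = Γ^q`. -/
theorem psplit_eraseHi {Γ₁ Γ₂ Γ : Ctx} (h : PSplit Γ₁ Γ₂ Γ) :
    Split (eraseHi Γ₁) (eraseHi Γ₂) (eraseHi Γ) := by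
  induction h with
  | nil => exact Split.nil
  | @both _ _ _ _ υ hυ _ ih =>
    cases υ with
    | hi B => simpa only [eraseHi_cons_hi] using ih
    | ty T =>
      simp only [eraseHi_cons_of_isHi_eq_false (rfl : (PTy.ty T).isHi = false)]
      exact Split.both hυ ih
  | left hυ _ ih =>
    simp only [eraseHi_cons_of_isHi_eq_false (PTy.isHi_eq_false_of_isLin hυ)]
    exact Split.left hυ ih
  | right hυ _ ih =>
    simp only [eraseHi_cons_of_isHi_eq_false (PTy.isHi_eq_false_of_isLin hυ)]
    exact Split.right hυ ih
  | hid _ ih =>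
    -- erasing the hidden copy leaves `x : li B` in the right component only
    rw [eraseHi_cons_hi, eraseHi_cons_of_isHi_eq_false rfl, eraseHi_cons_of_isHi_eq_false rfl]
    exact Split.right rfl ih
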